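/- arXiv:2203.07355 — 3 statements merged into one kernel-verified Lean document; each statement's English description precedes it below -/
import Mathlib

section
/- Let 𝔽 be a field, let t and N be natural numbers with N ≥ 3t + 1, let x_1, …, x_N be distinct elements of 𝔽, and let y_1, …, y_N ∈ 𝔽. If p, q ∈ 𝔽[X] are polynomials of degree at most t such that p(x_i) ≠ y_i for at most t indices i ∈ {1, …, N} and q(x_i) ≠ y_i for at most t indices i ∈ {1, …, N}, then p = q. -/
open Polynomial
open scoped Classical

/-!
The evaluation vectors of `p` and `q` at the `x i` are both within Hamming distance `t` of `y`,
so by the triangle inequality they differ in at most `2t` places. Hence `p` and `q` agree at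
`N - 2t ≥ t + 1` distinct points, which forces two polynomials of degree at most `t` to coincide.
-/

theorem card_filter_eq_add_hammingDist {ι : Type*} {β : ι → Type*} [Fintype ι]
    [∀ i, DecidableEq (β i)] (f g : ∀ i, β i) :
    (Finset.univ.filter fun i => f i = g i).card + hammingDist f g = Fintype.card ι :=
  Finset.card_filter_add_card_filter_not _

theorem Polynomial.eq_of_degree_le_of_hammingDist_eval_add_lt
    {R ι : Type*} [CommRing R] [IsDomain R] [Fintype ι] {x : ι → R} (hx : Function.Injective x)
    {p q : R[X]} {t : ℕ} (hp : p.degree ≤ t) (hq : q.degree ≤ t)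
    (hpq : hammingDist (fun i => p.eval (x i)) (fun i => q.eval (x i)) + t < Fintype.card ι) :
    p = q := by
  have hagree : t < (Finset.univ.filter fun i => p.eval (x i) = q.eval (x i)).card := by
    have := card_filter_eq_add_hammingDist (fun i => p.eval (x i)) (fun i => q.eval (x i))
    omega
  have hlt : (t : WithBot ℕ) < _ := WithBot.coe_lt_coe.mpr hagree
  exact eq_of_degrees_lt_of_eval_index_eq _ hx.injOn (hp.trans_lt hlt) (hq.trans_lt hlt)
    fun i hi => (Finset.mem_filter.mp hi).2

/-- Corollary 2 of the paper: with `N ≥ 3t+1` points of which at most `t` are erroneous,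
a degree-at-most-`t` polynomial is uniquely determined. -/
theorem reed_solomon_unique_decoding_of_three_t_plus_one
    (F : Type*) [Field F] (t N : ℕ) (hN : N ≥ 3 * t + 1)
    (x : Fin N → F) (hx : Function.Injective x) (y : Fin N → F)
    (p q : F[X]) (hp : p.degree ≤ t) (hq : q.degree ≤ t)
    (hpe : (Finset.univ.filter (fun i : Fin N => p.eval (x i) ≠ y i)).card ≤ t)
    (hqe : (Finset.univ.filter (fun i : Fin N => q.eval (x i) ≠ y i)).card ≤ t) :
    p = q := by
  have hpy : hammingDist (fun i => p.eval (x i)) y ≤ t := hpe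
  have hqy : hammingDist (fun i => q.eval (x i)) y ≤ t := hqe
  refine eq_of_degree_le_of_hammingDist_eval_add_lt hx hp hq ?_
  calc hammingDist (fun i => p.eval (x i)) (fun i => q.eval (x i)) + t
      ≤ hammingDist (fun i => p.eval (x i)) y + hammingDist (fun i => q.eval (x i)) y + t :=
        Nat.add_le_add_right (hammingDist_triangle_right _ _ y) t
    _ < Fintype.card (Fin N) := by rw [Fintype.card_fin]; omega
end

section
/- Let 𝔽 be a field, let t ≥ 1 be a natural number, let α_1, …, α_t be distinct nonzero elements of 𝔽, let A, B ∈ 𝔽[X] be polynomials of degree at most t, and let v_{i,j} ∈ 𝔽 for i, j ∈ {1, …, t} be arbitrary prescribed values. Then there exist polynomials O'_1, …, O'_t ∈ 𝔽[X], each of degree at most t, such that O'_i(α_j) = v_{i,j} for all i, j ∈ {1, …, t}, and the polynomial A(X)·B(X) − Σ_{i=1}^{t} X^i · O'_i(X) has degree at most t. -/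
open Polynomial

/-!
Interpolate the prescribed values by polynomials `R i` of degree `< t` and correct each of them
by `c i • Z`, where `Z = ∏ j, (X - α j)` vanishes at every node. The corrections add
`X * Z * S` with `S = ∑ i, c i X^i` an arbitrary polynomial of degree `< t`, and taking
`S = Q /ₘ (X * Z)` for the uncorrected difference `Q` leaves `Q %ₘ (X * Z)`, of degree `≤ t`.
-/

namespace Polynomial

variable {R : Type*} [CommRing R]

theorem degree_divByMonic_lt_of_natDegree_lt_add {f g : R[X]} (hg : g.Monic) {n : ℕ}
    (hf : f.natDegree < g.natDegree + n) : (f /ₘ g).degree < n := by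
  nontriviality R
  rcases n with _ | n
  · rw [(divByMonic_eq_zero_iff hg).2 (degree_lt_degree hf), degree_zero]
    exact WithBot.bot_lt_coe 0
  · refine degree_le_natDegree.trans_lt ?_
    rw [natDegree_divByMonic f hg]
    exact_mod_cast (by omega : f.natDegree - g.natDegree < n + 1)

theorem natDegree_lt_of_degree_lt_of_pos {p : R[X]} {n : ℕ} (hp : p.degree < n) (hn : 0 < n) :
    p.natDegree < n := by
  rcases eq_or_ne p 0 with rfl | hp0
  · exact hn
  · exact (natDegree_lt_iff_degree_lt hp0).2 hp

theorem sum_fin_C_coeff_mul_X_pow {p : R[X]} {n : ℕ} (hp : p.degree < n) :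
    ∑ i : Fin n, C (p.coeff i) * X ^ (i : ℕ) = p :=
  (sum_fin (fun i c => C c * X ^ i) (by simp) hp).trans p.sum_C_mul_X_pow_eq

theorem exists_degree_sub_sum_X_pow_mul_C_mul_le {Z : R[X]} {t : ℕ} (hZ : Z.Monic)
    (hZt : Z.natDegree = t) {Q : R[X]} (hQ : Q.natDegree ≤ 2 * t) :
    ∃ c : Fin t → R, (Q - ∑ i : Fin t, X ^ ((i : ℕ) + 1) * (C (c i) * Z)).degree ≤ t := by
  nontriviality R
  subst hZt
  have hXZ : (X * Z).Monic := monic_X.mul hZ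
  have hXZdeg : (X * Z).natDegree = Z.natDegree + 1 := by
    rw [monic_X.natDegree_mul hZ, natDegree_X, add_comm]
  set S := Q /ₘ (X * Z)
  have hS : S.degree < Z.natDegree :=
    degree_divByMonic_lt_of_natDegree_lt_add hXZ (by omega)
  refine ⟨fun i => S.coeff i, ?_⟩
  have hsum : ∑ i : Fin Z.natDegree, X ^ ((i : ℕ) + 1) * (C (S.coeff i) * Z) = X * Z * S := by
    conv_rhs => rw [← sum_fin_C_coeff_mul_X_pow hS, Finset.mul_sum]
    exact Finset.sum_congr rfl fun i _ => by ring
  have hmod : Q - X * Z * S = Q %ₘ (X * Z) :=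
    (eq_sub_of_add_eq (modByMonic_add_div Q (X * Z))).symm
  rw [hsum, hmod]
  have hmodlt := degree_modByMonic_lt Q hXZ
  rw [degree_eq_natDegree hXZ.ne_zero, hXZdeg] at hmodlt
  exact Order.le_of_lt_succ hmodlt

end Polynomial

theorem exists_degree_reduction_polynomials_with_prescribed_values_general
    (F : Type*) [Field F] (t : ℕ)
    (α : Fin t → F) (hα : Function.Injective α)
    (A B : F[X]) (hA : A.degree ≤ t) (hB : B.degree ≤ t)
    (v : Fin t → Fin t → F) :
    ∃ O' : Fin t → F[X],
      (∀ i, (O' i).degree ≤ t) ∧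
      (∀ i j, (O' i).eval (α j) = v i j) ∧
      (A * B - ∑ i : Fin t, X ^ ((i : ℕ) + 1) * O' i).degree ≤ t := by
  have hαinj : Set.InjOn α (Finset.univ : Finset (Fin t)) := hα.injOn
  set R : Fin t → F[X] := fun i => Lagrange.interpolate Finset.univ α (v i)
  have hRdeg (i : Fin t) : (R i).degree < t := by
    simpa only [Finset.card_univ, Fintype.card_fin] using
      Lagrange.degree_interpolate_lt (v i) hαinj
  set Z := Lagrange.nodal Finset.univ α
  have hZt : Z.natDegree = t := by simp [Z, Lagrange.natDegree_nodal]
  have hXR (i : Fin t) : (X ^ ((i : ℕ) + 1) * R i).natDegree ≤ 2 * t := by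
    have := natDegree_lt_of_degree_lt_of_pos (hRdeg i) i.pos
    exact natDegree_mul_le.trans (by rw [natDegree_X_pow]; omega)
  have hQ : (A * B - ∑ i : Fin t, X ^ ((i : ℕ) + 1) * R i).natDegree ≤ 2 * t := by
    refine (natDegree_sub_le _ _).trans
      (max_le ?_ (natDegree_sum_le_of_forall_le _ _ fun i _ => hXR i))
    have := natDegree_le_iff_degree_le.2 hA
    have := natDegree_le_iff_degree_le.2 hB
    exact natDegree_mul_le.trans (by omega)
  obtain ⟨c, hc⟩ := exists_degree_sub_sum_X_pow_mul_C_mul_le Lagrange.nodal_monic hZt hQ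
  refine ⟨fun i => R i + C (c i) * Z, fun i => ?_, fun i j => ?_, ?_⟩
  · refine natDegree_le_iff_degree_le.1 (natDegree_add_le_of_degree_le ?_ ?_)
    · exact natDegree_le_iff_degree_le.2 (hRdeg i).le
    · exact (natDegree_C_mul_le _ _).trans hZt.le
  · rw [eval_add, eval_mul, Lagrange.eval_interpolate_at_node _ hαinj (Finset.mem_univ j),
      Lagrange.eval_nodal_at_node (Finset.mem_univ j), mul_zero, add_zero]
  · simpa only [mul_add, Finset.sum_add_distrib, sub_add_eq_sub_sub] using hc

/-- Privacy of the verification-of-product phase: the degree-reduction polynomials can be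
chosen to match arbitrary prescribed values at the `t` adversarial evaluation points. -/
theorem exists_degree_reduction_polynomials_with_prescribed_values
    (F : Type*) [Field F] (t : ℕ) (ht : 1 ≤ t)
    (α : Fin t → F) (hα : Function.Injective α) (hα0 : ∀ i, α i ≠ 0)
    (A B : F[X]) (hA : A.degree ≤ t) (hB : B.degree ≤ t)
    (v : Fin t → Fin t → F) :
    ∃ O' : Fin t → F[X],
      (∀ i, (O' i).degree ≤ t) ∧
      (∀ i j, (O' i).eval (α j) = v i j) ∧
      (A * B - ∑ i : Fin t, X ^ ((i : ℕ) + 1) * O' i).degree ≤ t :=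
  exists_degree_reduction_polynomials_with_prescribed_values_general F t α hα A B hA hB v
end

section
/- Let 𝔽 be a field, let t ≥ 1 be a natural number, let α_1, …, α_t be distinct nonzero elements of 𝔽, and let F_0, F_1, G_0, G_1 ∈ 𝔽[X] be polynomials of degree at most t such that F_0(0) = 0, F_1(0) = 1, G_0(0) = 0, G_1(0) = 1, and F_0(α_l) = F_1(α_l) and G_0(α_l) = G_1(α_l) for every l ∈ {1, …, t}. Then G_1 + F_0 = G_0 + F_1 as polynomials. -/
/-!
Both `G1 + F0` and `G0 + F1` have degree at most `t`, take the value `1` at `0`, and agree at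
the `t` share points, since each summand is matched by its partner there. These are `t + 1`
distinct points, and a polynomial of degree at most `t` is determined by its values at `t + 1`
points.
-/

open Polynomial

theorem Polynomial.eq_of_degree_le_of_eval_zero_eq_of_eval_nodes_eq {R : Type*} [CommRing R]
    [IsDomain R] {n : ℕ} {α : Fin n → R} (hα : Function.Injective α) (hα0 : ∀ i, α i ≠ 0)
    {f g : R[X]} (hf : f.degree ≤ n) (hg : g.degree ≤ n) (h0 : f.eval 0 = g.eval 0)
    (hnodes : ∀ i, f.eval (α i) = g.eval (α i)) : f = g := by
  have hv : Function.Injective (Fin.cons 0 α : Fin (n + 1) → R) :=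
    Fin.cons_injective_iff.mpr ⟨fun ⟨i, hi⟩ => hα0 i hi, hα⟩
  have hcard : (n : WithBot ℕ) < (Finset.univ : Finset (Fin (n + 1))).card := by
    rw [Finset.card_univ, Fintype.card_fin]
    exact_mod_cast n.lt_succ_self
  refine eq_of_degrees_lt_of_eval_index_eq _ hv.injOn (hf.trans_lt hcard) (hg.trans_lt hcard) ?_
  intro i _
  cases i using Fin.cases with
  | zero => simpa using h0
  | succ i => simpa using hnodes i

theorem counting_privacy_general
    (F : Type*) [Field F] (t : ℕ)
    (α : Fin t → F) (hα : Function.Injective α) (hα0 : ∀ i, α i ≠ 0)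
    (F0 F1 G0 G1 : F[X])
    (hF0 : F0.degree ≤ t) (hF1 : F1.degree ≤ t)
    (hG0 : G0.degree ≤ t) (hG1 : G1.degree ≤ t)
    (hF00 : F0.eval 0 = 0) (hF10 : F1.eval 0 = 1)
    (hG00 : G0.eval 0 = 0) (hG10 : G1.eval 0 = 1)
    (hFagree : ∀ l, F0.eval (α l) = F1.eval (α l))
    (hGagree : ∀ l, G0.eval (α l) = G1.eval (α l)) :
    G1 + F0 = G0 + F1 := by
  refine eq_of_degree_le_of_eval_zero_eq_of_eval_nodes_eq hα hα0
    (degree_add_le_of_degree_le hG1 hF0) (degree_add_le_of_degree_le hG0 hF1) ?_ fun l => ?_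
  · simp [hF00, hF10, hG00, hG10]
  · simp [hFagree, hGagree]

/-- Privacy of the counting step: for polynomials of degree at most `t` with constant
terms `0` and `1` respectively, agreeing pairwise at the `t` adversarial points,
`G_1 + F_0 = G_0 + F_1`. -/
theorem counting_privacy
    (F : Type*) [Field F] (t : ℕ) (ht : 1 ≤ t)
    (α : Fin t → F) (hα : Function.Injective α) (hα0 : ∀ i, α i ≠ 0)
    (F0 F1 G0 G1 : F[X])
    (hF0 : F0.degree ≤ t) (hF1 : F1.degree ≤ t)
    (hG0 : G0.degree ≤ t) (hG1 : G1.degree ≤ t)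
    (hF00 : F0.eval 0 = 0) (hF10 : F1.eval 0 = 1)
    (hG00 : G0.eval 0 = 0) (hG10 : G1.eval 0 = 1)
    (hFagree : ∀ l, F0.eval (α l) = F1.eval (α l))
    (hGagree : ∀ l, G0.eval (α l) = G1.eval (α l)) :
    G1 + F0 = G0 + F1 :=
  counting_privacy_general F t α hα hα0 F0 F1 G0 G1 hF0 hF1 hG0 hG1 hF00 hF10 hG00 hG10 hFagree
    hGagree
end
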